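/- Let N > 2s > 0, 2*_s = 2N/(N-2s), C₀ := (4s/(N+2s))·((2*_s-1)M)^{-(N-2s)/(4s)} for some M ≥ 1, and S > 0. Suppose f is a bounded linear functional on a normed space H with a second norm ‖·‖_* satisfying S^{1/2}‖u‖_* ≤ ‖u‖, and ‖f‖' < C₀·S^{N/(4s)} (operator norm with respect to ‖·‖). Then for every u ∈ H with ‖u‖² = (2*_s-1)·M·‖u‖_*^{2*_s} and ‖u‖ ≥ δ > 0, one has (4s/(N+2s))·‖u‖² - f(u) ≥ ε·δ > 0, where ε := C₀S^{N/(4s)} - ‖f‖' > 0. -/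

import Mathlib

/-- If `‖f‖ < C₀ S^{N/(4s)}` with `C₀ = (4s/(N+2s)) ((2*_s-1)M)^{-(N-2s)/(4s)}`, then for
every `u` on the Nehari-type manifold `‖u‖² = (2*_s-1) M ‖u‖_*^{2*_s}` with `‖u‖ ≥ δ > 0`,
`(4s/(N+2s))‖u‖² - f(u) ≥ εδ > 0`, where `ε = C₀ S^{N/(4s)} - ‖f‖`. -/
theorem condition_J13_from_small_dual_norm {H : Type*} [NormedAddCommGroup H]
    [NormedSpace ℝ H] (N s S M δ : ℝ) (hs : 0 < s) (hN : 2 * s < N) (hS : 0 < S)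
    (hM : 1 ≤ M) (hδ : 0 < δ)
    (nstar : H → ℝ) (hn0 : ∀ v : H, 0 ≤ nstar v)
    (hn : ∀ v : H, S ^ ((1 : ℝ) / 2) * nstar v ≤ ‖v‖)
    (f : H →L[ℝ] ℝ)
    (hf : ‖f‖ < (4 * s / (N + 2 * s)) *
      ((2 * N / (N - 2 * s) - 1) * M) ^ (-(N - 2 * s) / (4 * s)) * S ^ (N / (4 * s))) :
    ∀ u : H, ‖u‖ ^ 2 = (2 * N / (N - 2 * s) - 1) * M * nstar u ^ (2 * N / (N - 2 * s)) →
      δ ≤ ‖u‖ →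
      ((4 * s / (N + 2 * s)) *
          ((2 * N / (N - 2 * s) - 1) * M) ^ (-(N - 2 * s) / (4 * s)) * S ^ (N / (4 * s)) -
        ‖f‖) * δ ≤ (4 * s / (N + 2 * s)) * ‖u‖ ^ 2 - f u := by
  intro u hu hδu
  have hN2s : 0 < N - 2 * s := by linarith
  have ha : 0 < ‖u‖ := lt_of_lt_of_le hδ hδu
  set p : ℝ := 2 * N / (N - 2 * s) with hp
  have hp2 : 2 < p := by
    rw [hp, lt_div_iff₀ hN2s]; nlinarith
  set A : ℝ := (p - 1) * M with hAdef
  have hA : 0 < A := by nlinarith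
  set b := nstar u with hbdef
  have hb0 : 0 ≤ b := hn0 u
  have hS2 : (0:ℝ) < S ^ ((1:ℝ)/2) := Real.rpow_pos_of_pos hS _
  have hba : b ≤ ‖u‖ / S ^ ((1:ℝ)/2) := (le_div_iff₀ hS2).2 (by rw [mul_comm]; exact hn u)
  have hbp : b ^ p ≤ (‖u‖ / S ^ ((1:ℝ)/2)) ^ p :=
    Real.rpow_le_rpow hb0 hba (by linarith)
  have hdiv : (‖u‖ / S ^ ((1:ℝ)/2)) ^ p = ‖u‖ ^ p / S ^ ((1:ℝ)/2 * p) := by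
    rw [Real.div_rpow (norm_nonneg u) hS2.le, ← Real.rpow_mul hS.le]
  -- ‖u‖^2 ≤ A * ‖u‖^p / S^{p/2}
  have h1 : ‖u‖ ^ 2 ≤ A * (‖u‖ ^ p / S ^ ((1:ℝ)/2 * p)) := by
    rw [hu]; rw [hdiv] at hbp
    exact mul_le_mul_of_nonneg_left hbp hA.le
  -- split ‖u‖^p = ‖u‖^(p-2) * ‖u‖^2
  have hsplit : ‖u‖ ^ p = ‖u‖ ^ (p - 2) * ‖u‖ ^ 2 := by
    rw [← Real.rpow_natCast ‖u‖ 2, ← Real.rpow_add ha]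
    norm_num
  have hSp : (0:ℝ) < S ^ ((1:ℝ)/2 * p) := Real.rpow_pos_of_pos hS _
  have h2 : S ^ ((1:ℝ)/2 * p) ≤ A * ‖u‖ ^ (p - 2) := by
    have hsq : (0:ℝ) < ‖u‖ ^ 2 := by positivity
    have h1' : S ^ ((1:ℝ)/2 * p) * ‖u‖ ^ 2 ≤ A * ‖u‖ ^ (p - 2) * ‖u‖ ^ 2 := by
      calc S ^ ((1:ℝ)/2 * p) * ‖u‖ ^ 2
          ≤ S ^ ((1:ℝ)/2 * p) * (A * (‖u‖ ^ p / S ^ ((1:ℝ)/2 * p))) :=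
            mul_le_mul_of_nonneg_left h1 hSp.le
        _ = A * ‖u‖ ^ (p - 2) * ‖u‖ ^ 2 := by rw [hsplit]; field_simp
    exact le_of_mul_le_mul_right h1' hsq
  have h3 : S ^ ((1:ℝ)/2 * p) / A ≤ ‖u‖ ^ (p - 2) := (div_le_iff₀' hA).2 h2
  set e : ℝ := (N - 2 * s) / (4 * s) with hedef
  have he : 0 < e := by positivity
  have h4 : (S ^ ((1:ℝ)/2 * p) / A) ^ e ≤ (‖u‖ ^ (p - 2)) ^ e :=
    Real.rpow_le_rpow (by positivity) h3 he.le
  have hid1 : (p - 2) * e = 1 := by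
    rw [hp, hedef]; field_simp; ring
  have hid2 : (1:ℝ)/2 * p * e = N / (4 * s) := by
    rw [hp, hedef]; field_simp
  have hKa : A ^ (-(N - 2 * s) / (4 * s)) * S ^ (N / (4 * s)) ≤ ‖u‖ := by
    have hr : (‖u‖ ^ (p - 2)) ^ e = ‖u‖ := by
      rw [← Real.rpow_mul (norm_nonneg u), hid1, Real.rpow_one]
    have hl : (S ^ ((1:ℝ)/2 * p) / A) ^ e
        = A ^ (-(N - 2 * s) / (4 * s)) * S ^ (N / (4 * s)) := by
      rw [Real.div_rpow hSp.le hA.le, ← Real.rpow_mul hS.le, hid2,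
        div_eq_mul_inv, ← Real.rpow_neg hA.le, mul_comm, hedef]
      congr 1
      ring
    rw [hr, hl] at h4; exact h4
  -- finish
  have hfu : f u ≤ ‖f‖ * ‖u‖ := by
    calc f u ≤ |f u| := le_abs_self _
      _ = ‖f u‖ := (Real.norm_eq_abs _).symm
      _ ≤ ‖f‖ * ‖u‖ := f.le_opNorm u
  set c : ℝ := 4 * s / (N + 2 * s) with hcdef
  have hNs : (0:ℝ) < N + 2 * s := by linarith
  have hc : 0 < c := by rw [hcdef]; positivity
  set K : ℝ := A ^ (-(N - 2 * s) / (4 * s)) * S ^ (N / (4 * s)) with hKdef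
  have hgoal : c * A ^ (-(N - 2 * s) / (4 * s)) * S ^ (N / (4 * s)) = c * K := by
    rw [hKdef]; ring
  rw [hgoal]
  have hf' : ‖f‖ < c * K := by rw [hgoal] at hf; exact hf
  have e1 : (c * K - ‖f‖) * δ ≤ (c * K - ‖f‖) * ‖u‖ :=
    mul_le_mul_of_nonneg_left hδu (sub_nonneg.2 hf'.le)
  have e2 : c * K * ‖u‖ ≤ c * ‖u‖ * ‖u‖ :=
    mul_le_mul_of_nonneg_right (mul_le_mul_of_nonneg_left hKa hc.le) (norm_nonneg u)
  have hsq : ‖u‖ ^ 2 = ‖u‖ * ‖u‖ := sq ‖u‖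
  calc (c * K - ‖f‖) * δ ≤ (c * K - ‖f‖) * ‖u‖ := e1
    _ = c * K * ‖u‖ - ‖f‖ * ‖u‖ := by ring
    _ ≤ c * ‖u‖ ^ 2 - f u := by rw [hsq]; linarith [e2, hfu]
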